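/- arXiv:1911.11719 — 5 statements merged into one kernel-verified Lean document; each statement's English description precedes it below -/
import Mathlib

section
/- Let $I = \{i_1 < \cdots < i_d\}$ and $J = \{j_1 < \cdots < j_d\}$ be $d$-element subsets of $\{1,\dots,n\}$. The set $X_{JI} = \{\pi \in S_d : \forall a,\ i_a \leq j_{\pi(a)}\}$ is downwards-closed in the Bruhat order on $S_d$: if $\pi \in X_{JI}$ and $\pi' \leq \pi$ in the Bruhat order, then $\pi' \in X_{JI}$. -/
/-- The number of inversions of a permutation of `Fin d`. -/
def inversions {d : ℕ} (π : Equiv.Perm (Fin d)) : ℕ :=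
  (Finset.univ.filter fun p : Fin d × Fin d => p.1 < p.2 ∧ π p.2 < π p.1).card

/-- `BruhatCov π' π` : `π` covers `π'` in the Bruhat order, i.e. `π' = π · (b a)` for some
transposition with `a < b`, `π b < π a`, and the number of inversions drops by one. -/
def BruhatCov {d : ℕ} (π' π : Equiv.Perm (Fin d)) : Prop :=
  (∃ a b : Fin d, a < b ∧ π b < π a ∧ π' = π * Equiv.swap a b) ∧
    inversions π = inversions π' + 1

/-- The Bruhat order on `Equiv.Perm (Fin d)`, generated by the covering relations. -/
def BruhatLE {d : ℕ} (π' π : Equiv.Perm (Fin d)) : Prop :=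
  Relation.ReflTransGen BruhatCov π' π

open Equiv

/-- The new value at `a` is `σ b`, and `i a ≤ i b ≤ j (σ b)`; the new value at `b` is `σ a`,
and `i b ≤ j (σ b) ≤ j (σ a)`. -/
theorem le_apply_mul_swap {α β : Type*} [LinearOrder α] [Preorder β] {i j : α → β}
    (hi : Monotone i) (hj : Monotone j) {σ : Perm α} (hσ : ∀ c, i c ≤ j (σ c))
    {a b : α} (hab : a ≤ b) (hσab : σ b ≤ σ a) (c : α) :
    i c ≤ j ((σ * swap a b) c) := by
  rw [Perm.mul_apply]
  rcases eq_or_ne c a with rfl | hca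
  · rw [swap_apply_left]
    exact (hi hab).trans (hσ b)
  rcases eq_or_ne c b with rfl | hcb
  · rw [swap_apply_right]
    exact (hσ c).trans (hj hσab)
  · rw [swap_apply_of_ne_of_ne hca hcb]
    exact hσ c

theorem bruhat_downward_closed_general (d : ℕ) (i j : Fin d → ℕ)
    (hi : StrictMono i) (hj : StrictMono j)
    (π π' : Equiv.Perm (Fin d))
    (hπ : ∀ a, i a ≤ j (π a)) (h : BruhatLE π' π) :
    ∀ a, i a ≤ j (π' a) := by
  induction h using Relation.ReflTransGen.head_induction_on with
  | refl => exact hπ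
  | head hcov _ ih =>
    obtain ⟨⟨a, b, hab, hσab, rfl⟩, -⟩ := hcov
    exact le_apply_mul_swap hi.monotone hj.monotone ih hab.le hσab.le

/-- The set `X_{JI}` of permutations `π` with `i_a ≤ j_{π(a)}` for all `a` is downwards closed
in the Bruhat order. -/
theorem bruhat_downward_closed (d n : ℕ) (i j : Fin d → ℕ)
    (hi : StrictMono i) (hj : StrictMono j)
    (hi' : ∀ a, i a ∈ Finset.Icc 1 n) (hj' : ∀ a, j a ∈ Finset.Icc 1 n)
    (π π' : Equiv.Perm (Fin d))
    (hπ : ∀ a, i a ≤ j (π a)) (h : BruhatLE π' π) :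
    ∀ a, i a ≤ j (π' a) :=
  bruhat_downward_closed_general d i j hi hj π π' hπ h
end

section
/- Let $I = \{i_1 < \cdots < i_d\}$ and $J = \{j_1 < \cdots < j_d\}$ be $d$-element subsets of $\{1,\dots,n\}$ with $i_a \leq j_a$ for all $a$. Then the set $X_{JI} = \{\pi \in S_d : \forall a,\ i_a \leq j_{\pi(a)}\}$ contains a maximum element with respect to the Bruhat order on $S_d$. -/
/-!
Take `π₀ ∈ X_{JI}` with the largest number of inversions. Call `(a, b)` an ascent of `π` if
`a < b`, `π a < π b` and `i b ≤ j (π a)`. Moving `b` towards `a` until no value of `π` lies strictly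
between `π a` and `π b`, the transposition of an ascent is a Bruhat cover of `π` inside `X_{JI}`.
Hence `π₀` has no ascent, and comparing two elements of `X_{JI}` at the last position where they
differ shows that an ascent-free element of `X_{JI}` is unique. So every other `π ∈ X_{JI}` has an
ascent, and climbing along covers inside `X_{JI}` must end at `π₀`.
-/

open Equiv

variable {d : ℕ}

lemma inversions_mul_swap {π : Perm (Fin d)} {a b : Fin d} (hab : a < b) (hv : π a < π b)
    (hmid : ∀ c, a < c → c < b → π c < π a ∨ π b < π c) :
    inversions (π * swap a b) = inversions π + 1 := by
  -- A pair with one end in `{a, b}` and the other strictly between them is an inversion of `π`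
  -- iff it is one of `π * swap a b`; every other pair is matched with its image under `swap a b`.
  let φ : Fin d × Fin d → Fin d × Fin d := fun x =>
    if x.1 = a ∧ x.2 < b ∨ x.2 = b ∧ a < x.1 then x else (swap a b x.1, swap a b x.2)
  have hab_mem : (a, b) ∈ Finset.univ.filter fun x : Fin d × Fin d =>
      x.1 < x.2 ∧ (π * swap a b) x.2 < (π * swap a b) x.1 :=
    Finset.mem_filter.2 ⟨Finset.mem_univ _, hab, by simpa using hv⟩
  rw [inversions, inversions, ← Finset.card_erase_add_one hab_mem]
  congr 1
  refine Finset.card_nbij' φ φ ?_ ?_ ?_ ?_ <;> rintro ⟨p, q⟩ <;>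
    simp only [Finset.mem_coe, Finset.mem_erase, Finset.mem_filter, Finset.mem_univ, true_and,
      Perm.mul_apply, φ] <;>
    by_cases h : p = a ∧ q < b ∨ q = b ∧ a < p <;>
    simp only [h, if_true, if_false, swap_apply_def] <;>
    grind

lemma bruhatCov_mul_swap {π : Perm (Fin d)} {a b : Fin d} (hab : a < b) (hv : π a < π b)
    (hmid : ∀ c, a < c → c < b → π c < π a ∨ π b < π c) :
    BruhatCov π (π * swap a b) :=
  ⟨⟨a, b, hab, by simpa using hv, by simp [mul_assoc]⟩, inversions_mul_swap hab hv hmid⟩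

lemma bruhatLE_of_forall_ne_exists_bruhatCov {P : Perm (Fin d) → Prop} {π₀ : Perm (Fin d)}
    (hmax : ∀ π, P π → inversions π ≤ inversions π₀)
    (hstep : ∀ π, P π → π ≠ π₀ → ∃ π', P π' ∧ BruhatCov π π') {π : Perm (Fin d)} (hπ : P π) :
    BruhatLE π π₀ := by
  induction h : inversions π₀ - inversions π using Nat.strong_induction_on generalizing π with
  | _ n ih =>
    by_cases hne : π = π₀
    · exact hne ▸ Relation.ReflTransGen.refl
    obtain ⟨π', hπ', hcov⟩ := hstep π hπ hne
    have hle := hmax π' hπ'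
    have hup := hcov.2
    exact Relation.ReflTransGen.head hcov (ih _ (by omega) hπ' rfl)

section Ascent

variable {α : Type*} [Preorder α] (i j : Fin d → α)

/-- `(a, b)` is an ascent of `π` whose transposition keeps `π` in `X_{JI}`. -/
def IsAscent (π : Perm (Fin d)) (a b : Fin d) : Prop :=
  a < b ∧ π a < π b ∧ i b ≤ j (π a)

variable {i j}

lemma IsAscent.exists_tight (hi : Monotone i) {π : Perm (Fin d)} {a b : Fin d}
    (h : IsAscent i j π a b) :
    ∃ c, IsAscent i j π a c ∧ ∀ x, a < x → x < c → π x < π a ∨ π c < π x := by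
  classical
  obtain ⟨hab, hv, hij⟩ := h
  obtain ⟨c, hc, hmin⟩ := (Finset.univ.filter fun c => a < c ∧ c ≤ b ∧ π a < π c ∧ π c ≤ π b
    ).exists_min_image id ⟨b, by simp [hab, hv]⟩
  simp only [Finset.mem_filter, Finset.mem_univ, true_and, id] at hc hmin
  obtain ⟨hac, hcb, hvc, hvcb⟩ := hc
  refine ⟨c, ⟨hac, hvc, (hi hcb).trans hij⟩, fun x hax hxc => ?_⟩
  by_contra! hx
  have hxa : π a < π x := hx.1.lt_of_ne (π.injective.ne hax.ne)
  have hxc' : π x < π c := hx.2.lt_of_ne (π.injective.ne hxc.ne)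
  exact hxc.not_ge (hmin x ⟨hax, hxc.le.trans hcb, hxa, hxc'.le.trans hvcb⟩)

lemma IsAscent.exists_bruhatCov (hi : Monotone i) (hj : Monotone j) {π : Perm (Fin d)}
    (hπ : ∀ x, i x ≤ j (π x)) {a b : Fin d} (h : IsAscent i j π a b) :
    ∃ π', (∀ x, i x ≤ j (π' x)) ∧ BruhatCov π π' := by
  obtain ⟨c, ⟨hac, hv, hij⟩, hmid⟩ := h.exists_tight hi
  refine ⟨π * swap a c, fun x => ?_, bruhatCov_mul_swap hac hv hmid⟩
  rw [Perm.mul_apply, swap_apply_def]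
  split_ifs with hxa hxc
  · exact hxa ▸ (hπ a).trans (hj hv.le)
  · exact hxc ▸ hij
  · exact hπ x

lemma isAscent_symm_apply {π ρ : Perm (Fin d)} (hρ : ∀ x, i x ≤ j (ρ x)) {b : Fin d}
    (hagree : ∀ x, b < x → π x = ρ x) (hlt : ρ b < π b) :
    IsAscent i j π (π.symm (ρ b)) b := by
  set a := π.symm (ρ b)
  have ha : π a = ρ b := π.apply_symm_apply _
  have hne : a ≠ b := fun hab => hlt.ne (hab ▸ ha).symm
  have hle : a ≤ b := not_lt.1 fun hba => hba.ne' (ρ.injective ((hagree a hba).symm.trans ha))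
  exact ⟨hle.lt_of_ne hne, ha ▸ hlt, ha ▸ hρ b⟩

lemma eq_of_forall_not_isAscent {π ρ : Perm (Fin d)} (hπ : ∀ x, i x ≤ j (π x))
    (hρ : ∀ x, i x ≤ j (ρ x)) (hπa : ∀ a b, ¬IsAscent i j π a b)
    (hρa : ∀ a b, ¬IsAscent i j ρ a b) : π = ρ := by
  classical
  by_contra hne
  obtain ⟨b, hb, hmax⟩ := (Finset.univ.filter fun x => π x ≠ ρ x).exists_max_image id
    (by simpa [Finset.filter_nonempty_iff, Equiv.ext_iff] using hne)
  simp only [Finset.mem_filter, Finset.mem_univ, true_and, id] at hb hmax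
  have hagree : ∀ x, b < x → π x = ρ x := fun x hbx => by
    by_contra hx
    exact hbx.not_ge (hmax x hx)
  rcases hb.lt_or_gt with hlt | hlt
  · exact hρa _ _ (isAscent_symm_apply hπ (fun x hx => (hagree x hx).symm) hlt)
  · exact hπa _ _ (isAscent_symm_apply hρ hagree hlt)

end Ascent

theorem exists_bruhat_max_general (d : ℕ) (i j : Fin d → ℕ)
    (hi : StrictMono i) (hj : StrictMono j)
    (hIJ : ∀ a, i a ≤ j a) :
    ∃ π₀ : Equiv.Perm (Fin d), (∀ a, i a ≤ j (π₀ a)) ∧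
      ∀ π : Equiv.Perm (Fin d), (∀ a, i a ≤ j (π a)) → BruhatLE π π₀ := by
  obtain ⟨π₀, hπ₀, hmax⟩ := (Finset.univ.filter fun π : Perm (Fin d) => ∀ a, i a ≤ j (π a)
    ).exists_max_image inversions ⟨1, by simpa using hIJ⟩
  simp only [Finset.mem_filter, Finset.mem_univ, true_and] at hπ₀ hmax
  have hπ₀a : ∀ a b, ¬IsAscent i j π₀ a b := fun a b h => by
    obtain ⟨π', hπ', -, hcov⟩ := h.exists_bruhatCov hi.monotone hj.monotone hπ₀
    have := hmax π' hπ'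
    omega
  refine ⟨π₀, hπ₀, fun π hπ => bruhatLE_of_forall_ne_exists_bruhatCov hmax (fun π hπ hne => ?_) hπ⟩
  obtain ⟨a, b, h⟩ : ∃ a b, IsAscent i j π a b := by
    by_contra! h
    exact hne (eq_of_forall_not_isAscent hπ hπ₀ h hπ₀a)
  exact h.exists_bruhatCov hi.monotone hj.monotone hπ

/-- If `I ≤ J` componentwise then the set `X_{JI} = {π : ∀ a, i_a ≤ j_{π(a)}}` contains a maximum
element with respect to the Bruhat order on `S_d`. -/
theorem exists_bruhat_max (d n : ℕ) (i j : Fin d → ℕ)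
    (hi : StrictMono i) (hj : StrictMono j)
    (hi' : ∀ a, i a ∈ Finset.Icc 1 n) (hj' : ∀ a, j a ∈ Finset.Icc 1 n)
    (hIJ : ∀ a, i a ≤ j a) :
    ∃ π₀ : Equiv.Perm (Fin d), (∀ a, i a ≤ j (π₀ a)) ∧
      ∀ π : Equiv.Perm (Fin d), (∀ a, i a ≤ j (π a)) → BruhatLE π π₀ :=
  exists_bruhat_max_general d i j hi hj hIJ
end

section
/- Let $\mathbf{k}$ be a field and $n \geq d \geq 1$. Define the algebra $A_n^{(d)}$ as the quotient of the incidence algebra of the poset of $d$-element subsets of $\{1,\dots,n\}$ (ordered componentwise via increasing enumerations) by the two-sided ideal generated by the basis elements $f_{JI}$ for which there exists an index $1 \leq a < d$ with $j_a \geq i_{a+1}$. Then the $\mathbf{k}$-dimension of $A_n^{(d)}$ equals the number of pairs $(I, J)$ of $d$-element subsets of $\{1,\dots,n\}$ with $i_a \leq j_a \leq i_{a+1} - 1$ for all $1 \leq a < d$ and $i_d \leq j_d$, which equals $\binom{n+d}{2d}$. -/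
/-- The poset of `d`-element subsets of `{1,…,n}`, encoded as strictly increasing enumerations
`Fin d → Fin (n+1)` with values in `{1,…,n}`, equipped with the componentwise (product) order. -/
abbrev SubsetPoset (n d : ℕ) : Type :=
  {f : Fin d → Fin (n + 1) // (∀ a b : Fin d, a < b → f a < f b) ∧ ∀ a : Fin d, 1 ≤ (f a : ℕ)}

instance (n d : ℕ) : DecidableRel (α := SubsetPoset n d) (· ≤ ·) :=
  fun I J => decidable_of_iff (∀ a, I.1 a ≤ J.1 a) Iff.rfl

instance (n d : ℕ) : DecidableRel (α := SubsetPoset n d) (· < ·) :=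
  fun I J => decidable_of_iff (I ≤ J ∧ ¬J ≤ I) lt_iff_le_not_ge.symm

instance (n d : ℕ) : LocallyFiniteOrder (SubsetPoset n d) :=
  Fintype.toLocallyFiniteOrder

/-- The basis element `f_{JI}` of the incidence algebra (for `I ≤ J`), taking value `1` on the
pair `(I, J)` and `0` elsewhere. -/
def basisElt (𝕜 : Type*) [Semiring 𝕜] (n d : ℕ) (I J : SubsetPoset n d) :
    IncidenceAlgebra 𝕜 (SubsetPoset n d) :=
  ⟨fun x y => if x = I ∧ y = J ∧ I ≤ J then 1 else 0, by
    intro x y hxy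
    try dsimp only
    rw [if_neg]
    rintro ⟨rfl, rfl, hIJ⟩
    exact hxy hIJ⟩

/-- The relation whose induced ring congruence quotients the incidence algebra by the two-sided
ideal generated by the basis elements `f_{JI}`, `I ≤ J`, such that `j_a ≥ i_{a+1}` for some
`1 ≤ a < d`. -/
def auslanderRel (𝕜 : Type*) [Semiring 𝕜] (n d : ℕ) :
    IncidenceAlgebra 𝕜 (SubsetPoset n d) → IncidenceAlgebra 𝕜 (SubsetPoset n d) → Prop :=
  fun x y =>
    (∃ I J : SubsetPoset n d, I ≤ J ∧
      (∃ a b : Fin d, (b : ℕ) = (a : ℕ) + 1 ∧ (I.1 b : ℕ) ≤ (J.1 a : ℕ)) ∧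
      x = basisElt 𝕜 n d I J) ∧ y = 0

/-- The pairs `(I, J)` of `d`-element subsets of `{1,…,n}` with
`i_a ≤ j_a ≤ i_{a+1} - 1` for `1 ≤ a < d` and `i_d ≤ j_d`. -/
def interleavingPairs (n d : ℕ) : Finset ((Fin d → Fin (n + 1)) × (Fin d → Fin (n + 1))) :=
  Finset.univ.filter fun p =>
    (∀ a b : Fin d, a < b → p.1 a < p.1 b) ∧
    (∀ a b : Fin d, a < b → p.2 a < p.2 b) ∧
    (∀ a : Fin d, 1 ≤ (p.1 a : ℕ)) ∧
    (∀ a : Fin d, 1 ≤ (p.2 a : ℕ)) ∧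
    (∀ a : Fin d, (p.1 a : ℕ) ≤ (p.2 a : ℕ)) ∧
    (∀ a b : Fin d, (b : ℕ) = (a : ℕ) + 1 → (p.2 a : ℕ) < (p.1 b : ℕ))

/-!
Agreeing on the interleaved pairs `i_a ≤ j_a < i_{a+1}` is a ring congruence on the incidence
algebra: the entry of `f * g` at `(I, K)` only involves entries at pairs `(I, J)` and `(J, K)` with
`I ≤ J ≤ K`, and these are interleaved whenever `(I, K)` is. For `I ≤ J` the generators `f_{JI}`
are exactly the basis elements of the non-interleaved pairs, so the ideal is the kernel of the
restriction to interleaved pairs, and the quotient has one dimension per interleaved pair.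

Sending an interleaved pair to the chain `i₁ - 1 < j₁ < i₂ < j₂ + 1 < ⋯ < i_d + d - 2 <
j_d + d - 1` is a bijection onto the `2d`-element subsets of `{0, …, n + d - 1}`.
-/

open Finset

namespace IncidenceAlgebra

variable {𝕜 α : Type*} [Semiring 𝕜] [Preorder α]

def restrict (S : α → α → Prop) :
    IncidenceAlgebra 𝕜 α →ₗ[𝕜] ({p : α × α // S p.1 p.2} → 𝕜) where
  toFun f p := f p.1.1 p.1.2
  map_add' _ _ := rfl
  map_smul' _ _ := rfl

lemma restrict_surjective {S : α → α → Prop} (hS : ∀ a b, S a b → a ≤ b) :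
    Function.Surjective (restrict (𝕜 := 𝕜) S) := by
  classical
  intro v
  refine ⟨⟨fun a b => if h : S a b then v ⟨(a, b), h⟩ else 0, fun a b hab => ?_⟩, ?_⟩
  · exact dif_neg fun h => hab (hS a b h)
  · funext p
    exact dif_pos p.2

def restrictCon [LocallyFiniteOrder α] {S : α → α → Prop}
    (hS : ∀ ⦃a b c⦄, S a c → a ≤ b → b ≤ c → S a b ∧ S b c) :
    RingCon (IncidenceAlgebra 𝕜 α) where
  r f g := ∀ a b, S a b → f a b = g a b
  iseqv := ⟨fun _ _ _ _ => rfl, fun h a b hab => (h a b hab).symm,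
    fun h₁ h₂ a b hab => (h₁ a b hab).trans (h₂ a b hab)⟩
  add' h₁ h₂ a b hab := by rw [add_apply, add_apply, h₁ a b hab, h₂ a b hab]
  mul' hf hg a c hac := by
    rw [mul_apply, mul_apply]
    refine sum_congr rfl fun b hb => ?_
    obtain ⟨hab, hbc⟩ := mem_Icc.1 hb
    obtain ⟨h₁, h₂⟩ := hS hac hab hbc
    rw [hf a b h₁, hg b c h₂]

lemma sum_apply {ι : Type*} (s : Finset ι) (f : ι → IncidenceAlgebra 𝕜 α) (a b : α) :
    (∑ i ∈ s, f i) a b = ∑ i ∈ s, f i a b :=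
  map_sum (⟨⟨fun f => f a b, rfl⟩, fun _ _ => rfl⟩ : IncidenceAlgebra 𝕜 α →+ 𝕜) f s

end IncidenceAlgebra

lemma RingQuot.rel_of_mkRingHom_eq {R : Type*} [Semiring R] (c : RingCon R)
    {r : R → R → Prop} (hr : ∀ ⦃x y⦄, r x y → c x y) {x y : R}
    (h : mkRingHom r x = mkRingHom r y) : c x y := by
  have w : ∀ ⦃x y⦄, r x y → c.mk' x = c.mk' y := fun _ _ hxy => c.eq.2 (hr hxy)
  have := congrArg (lift ⟨c.mk', w⟩) h
  rwa [lift_mkRingHom_apply, lift_mkRingHom_apply, RingCon.coe_mk', c.eq] at this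

lemma LinearMap.finrank_eq_of_surjective_of_eq_zero_iff {K M N N' : Type*} [Ring K]
    [AddCommGroup M] [Module K M] [AddCommGroup N] [Module K N] [AddCommGroup N'] [Module K N']
    {f : M →ₗ[K] N} {g : M →ₗ[K] N'} (hf : Function.Surjective f)
    (hg : Function.Surjective g) (h : ∀ x, f x = 0 ↔ g x = 0) :
    Module.finrank K N = Module.finrank K N' :=
  have hker : ker f = ker g := Submodule.ext fun x => by simp only [mem_ker, h]
  ((f.quotKerEquivOfSurjective hf).symm.trans ((Submodule.quotEquivOfEq _ _ hker).trans
    (g.quotKerEquivOfSurjective hg))).finrank_eq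

lemma Fin.strictMono_of_lt_of_val_eq_succ {α : Type*} [Preorder α] {m : ℕ} {f : Fin m → α}
    (h : ∀ k l : Fin m, (l : ℕ) = k + 1 → f k < f l) : StrictMono f := by
  cases m with
  | zero => exact fun k => k.elim0
  | succ m => exact Fin.strictMono_iff_lt_succ.2 fun k => h _ _ (by simp)

lemma StrictMono.apply_add_sub_le {m : ℕ} {f : Fin m → ℕ} (hf : StrictMono f) {k l : Fin m}
    (hkl : k ≤ l) : f k + (l - k : ℕ) ≤ f l := by
  obtain ⟨j, hj⟩ := Nat.exists_eq_add_of_le (Fin.le_def.1 hkl)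
  induction j generalizing l with
  | zero => simp [Fin.ext hj]
  | succ j ih =>
    have hl' : (k : ℕ) + j < m := by omega
    have h₁ := ih (l := ⟨k + j, hl'⟩) (Fin.le_def.2 (by simp)) rfl
    have h₂ := hf (show (⟨k + j, hl'⟩ : Fin m) < l from Fin.lt_def.2 (by simp only; omega))
    simp only at h₁
    omega

namespace HigherAuslander

variable {n d : ℕ}

def Interleaved (I J : SubsetPoset n d) : Prop := (I.1, J.1) ∈ interleavingPairs n d

instance : DecidableRel (Interleaved (n := n) (d := d)) :=
  fun I J => inferInstanceAs (Decidable ((I.1, J.1) ∈ interleavingPairs n d))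

lemma interleaved_iff {I J : SubsetPoset n d} :
    Interleaved I J ↔ I ≤ J ∧ ∀ a b : Fin d, (b : ℕ) = a + 1 → (J.1 a : ℕ) < I.1 b := by
  simp only [Interleaved, interleavingPairs, mem_filter, mem_univ, true_and]
  exact ⟨fun h => ⟨h.2.2.2.2.1, h.2.2.2.2.2⟩, fun h => ⟨I.2.1, J.2.1, I.2.2, J.2.2, h⟩⟩

lemma Interleaved.le {I J : SubsetPoset n d} (h : Interleaved I J) : I ≤ J :=
  (interleaved_iff.1 h).1

lemma not_interleaved_iff {I J : SubsetPoset n d} (h : I ≤ J) :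
    ¬Interleaved I J ↔ ∃ a b : Fin d, (b : ℕ) = a + 1 ∧ (I.1 b : ℕ) ≤ J.1 a := by
  simp [interleaved_iff, h]

lemma Interleaved.of_le_of_le ⦃I J K : SubsetPoset n d⦄ (h : Interleaved I K) (hIJ : I ≤ J)
    (hJK : J ≤ K) : Interleaved I J ∧ Interleaved J K := by
  obtain ⟨-, h⟩ := interleaved_iff.1 h
  refine ⟨interleaved_iff.2 ⟨hIJ, fun a b hab => ?_⟩, interleaved_iff.2 ⟨hJK, fun a b hab => ?_⟩⟩
  · exact (Fin.le_def.1 (hJK a)).trans_lt (h a b hab)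
  · exact (h a b hab).trans_le (hIJ b)

lemma card_interleaved :
    Fintype.card {p : SubsetPoset n d × SubsetPoset n d // Interleaved p.1 p.2} =
      #(interleavingPairs n d) := by
  have mem {q} (hq : q ∈ interleavingPairs n d) := by
    simpa only [interleavingPairs, mem_filter, mem_univ, true_and] using hq
  rw [← Fintype.card_coe]
  exact Fintype.card_congr
    { toFun p := ⟨(p.1.1.1, p.1.2.1), p.2⟩
      invFun q := ⟨(⟨q.1.1, (mem q.2).1, (mem q.2).2.2.1⟩,
        ⟨q.1.2, (mem q.2).2.1, (mem q.2).2.2.2.1⟩), q.2⟩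
      left_inv _ := rfl
      right_inv _ := rfl }

section basisElt

variable (𝕜 : Type*) [Semiring 𝕜]

lemma basisElt_apply (I J x y : SubsetPoset n d) :
    basisElt 𝕜 n d I J x y = if x = I ∧ y = J ∧ I ≤ J then 1 else 0 := rfl

lemma sum_smul_basisElt (f : IncidenceAlgebra 𝕜 (SubsetPoset n d)) :
    ∑ q : SubsetPoset n d × SubsetPoset n d, f q.1 q.2 • basisElt 𝕜 n d q.1 q.2 = f := by
  ext a b hab
  rw [IncidenceAlgebra.sum_apply, sum_eq_single_of_mem (a, b) (mem_univ _)]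
  · simp [basisElt_apply, hab]
  · rintro ⟨I, J⟩ - hq
    rw [IncidenceAlgebra.constSMul_apply, basisElt_apply, if_neg, smul_zero]
    rintro ⟨rfl, rfl, -⟩
    exact hq rfl

lemma restrictCon_of_auslanderRel {x y : IncidenceAlgebra 𝕜 (SubsetPoset n d)}
    (h : auslanderRel 𝕜 n d x y) : IncidenceAlgebra.restrictCon Interleaved.of_le_of_le x y := by
  obtain ⟨⟨I, J, hIJ, hbad, rfl⟩, rfl⟩ := h
  intro I' J' hI'J'
  rw [basisElt_apply, if_neg, IncidenceAlgebra.zero_apply]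
  rintro ⟨rfl, rfl, -⟩
  exact (not_interleaved_iff hIJ).2 hbad hI'J'

end basisElt

lemma mkAlgHom_eq_zero_iff (𝕜 : Type*) [CommSemiring 𝕜] (f : IncidenceAlgebra 𝕜 (SubsetPoset n d)) :
    RingQuot.mkAlgHom 𝕜 (auslanderRel 𝕜 n d) f = 0 ↔
      IncidenceAlgebra.restrict Interleaved f = 0 := by
  constructor
  · intro hf
    have hmk : RingQuot.mkRingHom (auslanderRel 𝕜 n d) f = RingQuot.mkRingHom _ 0 := by
      rw [← RingQuot.mkAlgHom_coe 𝕜, RingHom.coe_coe, hf, map_zero]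
    have h := RingQuot.rel_of_mkRingHom_eq _ (fun _ _ => restrictCon_of_auslanderRel 𝕜) hmk
    funext p
    exact h _ _ p.2
  · intro hf
    rw [← sum_smul_basisElt 𝕜 f, map_sum]
    refine sum_eq_zero fun q _ => ?_
    rw [map_smul]
    by_cases hq : Interleaved q.1 q.2
    · rw [show f q.1 q.2 = 0 from congrFun hf ⟨q, hq⟩, zero_smul]
    by_cases hle : q.1 ≤ q.2
    · rw [RingQuot.mkAlgHom_rel 𝕜 ⟨⟨q.1, q.2, hle, (not_interleaved_iff hle).1 hq, rfl⟩, rfl⟩,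
        map_zero, smul_zero]
    · rw [IncidenceAlgebra.apply_eq_zero_of_not_le hle, zero_smul]

theorem finrank_ringQuot_auslanderRel (𝕜 : Type*) [CommRing 𝕜] [Nontrivial 𝕜] :
    Module.finrank 𝕜 (RingQuot (auslanderRel 𝕜 n d)) = #(interleavingPairs n d) := by
  refine (LinearMap.finrank_eq_of_surjective_of_eq_zero_iff
    (N := RingQuot (auslanderRel 𝕜 n d)) (f := (RingQuot.mkAlgHom 𝕜 _).toLinearMap)
    (RingQuot.mkAlgHom_surjective 𝕜 _)
    (IncidenceAlgebra.restrict_surjective fun _ _ h => Interleaved.le h)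
    (mkAlgHom_eq_zero_iff 𝕜)).trans ?_
  rw [Module.finrank_pi, card_interleaved]

def twoMul (a : Fin d) : Fin (2 * d) := ⟨2 * a, by omega⟩

def twoMulAddOne (a : Fin d) : Fin (2 * d) := ⟨2 * a + 1, by omega⟩

@[simp] lemma val_twoMul (a : Fin d) : (twoMul a : ℕ) = 2 * a := rfl

@[simp] lemma val_twoMulAddOne (a : Fin d) : (twoMulAddOne a : ℕ) = 2 * a + 1 := rfl

lemma exists_eq_twoMul_or_eq_twoMulAddOne (k : Fin (2 * d)) :
    ∃ a : Fin d, k = twoMul a ∨ k = twoMulAddOne a := by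
  obtain ⟨a, ha | ha⟩ := Nat.even_or_odd' k
  · exact ⟨⟨a, by omega⟩, .inl (Fin.ext ha)⟩
  · exact ⟨⟨a, by omega⟩, .inr (Fin.ext ha)⟩

def merge (x y : Fin d → ℕ) (k : Fin (2 * d)) : ℕ :=
  if (k : ℕ) % 2 = 0 then x ⟨k / 2, by omega⟩ else y ⟨k / 2, by omega⟩

section merge

variable {x y : Fin d → ℕ}

@[simp]
lemma merge_twoMul (a : Fin d) : merge x y (twoMul a) = x a := by
  simp [merge]

@[simp]
lemma merge_twoMulAddOne (a : Fin d) : merge x y (twoMulAddOne a) = y a := by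
  rw [merge, if_neg (by simp)]
  congr
  simp only [val_twoMulAddOne]
  omega

lemma strictMono_merge (hxy : ∀ a, x a < y a)
    (hyx : ∀ a b : Fin d, (b : ℕ) = a + 1 → y a < x b) : StrictMono (merge x y) := by
  refine Fin.strictMono_of_lt_of_val_eq_succ fun k l hkl => ?_
  obtain ⟨a, rfl | rfl⟩ := exists_eq_twoMul_or_eq_twoMulAddOne k
  · obtain rfl : l = twoMulAddOne a := Fin.ext hkl
    simpa using hxy a
  · have ha : (a : ℕ) + 1 < d := by simp only [val_twoMulAddOne] at hkl; omega
    obtain rfl : l = twoMul ⟨a + 1, ha⟩ :=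
      Fin.ext (by simp only [hkl, val_twoMulAddOne, val_twoMul]; ring)
    simpa using hyx a ⟨a + 1, ha⟩ rfl

end merge

/-- The chain `i₁ - 1 < j₁ < i₂ < j₂ + 1 < ⋯`, in 1-based indices (here `a : Fin d` is 0-based). -/
def interleave (p : (Fin d → Fin (n + 1)) × (Fin d → Fin (n + 1))) : Fin (2 * d) → ℕ :=
  merge (fun a => p.1 a + a - 1) (fun a => p.2 a + a)

/-- `Fin.ofNat` reduces modulo `n + 1`; it is only applied to values at most `n`, by
`le_apply_and_apply_add_le`. -/
def deinterleave (e : Fin (2 * d) → ℕ) : (Fin d → Fin (n + 1)) × (Fin d → Fin (n + 1)) :=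
  (fun a => Fin.ofNat (n + 1) (e (twoMul a) + 1 - a),
    fun a => Fin.ofNat (n + 1) (e (twoMulAddOne a) - a))

section interleave

variable (p : (Fin d → Fin (n + 1)) × (Fin d → Fin (n + 1)))

@[simp]
lemma interleave_twoMul (a : Fin d) : interleave p (twoMul a) = p.1 a + a - 1 :=
  merge_twoMul a

@[simp]
lemma interleave_twoMulAddOne (a : Fin d) : interleave p (twoMulAddOne a) = p.2 a + a :=
  merge_twoMulAddOne a

lemma interleave_lt (k : Fin (2 * d)) : interleave p k < n + d := by
  obtain ⟨a, rfl | rfl⟩ := exists_eq_twoMul_or_eq_twoMulAddOne k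
  · have := (p.1 a).isLt
    simp only [interleave_twoMul]
    omega
  · have := (p.2 a).isLt
    simp only [interleave_twoMulAddOne]
    omega

end interleave

lemma mem_interleavingPairs_iff {p : (Fin d → Fin (n + 1)) × (Fin d → Fin (n + 1))} :
    p ∈ interleavingPairs n d ↔ (∀ a, 1 ≤ (p.1 a : ℕ)) ∧ StrictMono (interleave p) := by
  simp only [interleavingPairs, mem_filter, mem_univ, true_and]
  constructor
  · rintro ⟨-, -, hI, -, hIJ, hJI⟩
    refine ⟨hI, strictMono_merge (fun a => ?_) fun a b hab => ?_⟩
    · have := hI a; have := hIJ a; omega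
    · have := hJI a b hab; omega
  · rintro ⟨hI, hmono⟩
    have hIJ (a : Fin d) : (p.1 a : ℕ) ≤ p.2 a := by
      have := hmono (show twoMul a < twoMulAddOne a from Fin.lt_def.2 (by simp))
      simp only [interleave_twoMul, interleave_twoMulAddOne] at this
      omega
    refine ⟨fun a b hab => ?_, fun a b hab => ?_, hI, fun a => (hI a).trans (hIJ a), hIJ,
      fun a b hab => ?_⟩
    · have h := hmono.apply_add_sub_le
        (show twoMul a ≤ twoMul b from Fin.le_def.2 (by simp only [val_twoMul]; omega))
      simp only [interleave_twoMul, val_twoMul] at h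
      have := hI a
      simp only [Fin.lt_def] at hab ⊢
      omega
    · have h := hmono.apply_add_sub_le (show twoMulAddOne a ≤ twoMulAddOne b from
        Fin.le_def.2 (by simp only [val_twoMulAddOne]; omega))
      simp only [interleave_twoMulAddOne, val_twoMulAddOne] at h
      simp only [Fin.lt_def] at hab ⊢
      omega
    · have := hmono (show twoMulAddOne a < twoMul b from
        Fin.lt_def.2 (by simp only [val_twoMulAddOne, val_twoMul]; omega))
      simp only [interleave_twoMul, interleave_twoMulAddOne] at this
      omega

lemma deinterleave_interleave {p : (Fin d → Fin (n + 1)) × (Fin d → Fin (n + 1))}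
    (hp : ∀ a, 1 ≤ (p.1 a : ℕ)) : deinterleave (interleave p) = p := by
  refine Prod.ext (funext fun a => Fin.ext ?_) (funext fun a => Fin.ext ?_)
  · have := hp a
    have := (p.1 a).isLt
    rw [deinterleave, Fin.val_ofNat, interleave_twoMul, Nat.mod_eq_of_lt (by omega)]
    omega
  · have := (p.2 a).isLt
    rw [deinterleave, Fin.val_ofNat, interleave_twoMulAddOne, Nat.mod_eq_of_lt (by omega)]
    omega

section deinterleave

variable {e : Fin (2 * d) → ℕ}

lemma le_apply_and_apply_add_le (he : StrictMono e) (hlt : ∀ k, e k < n + d)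
    (k : Fin (2 * d)) : (k : ℕ) ≤ e k ∧ e k + (2 * d - k) ≤ n + d := by
  have h₀ := he.apply_add_sub_le (show ⟨0, k.pos⟩ ≤ k from Fin.le_def.2 (Nat.zero_le _))
  have h₁ := he.apply_add_sub_le
    (show k ≤ ⟨2 * d - 1, by omega⟩ from Fin.le_def.2 (by simp only; omega))
  have := hlt ⟨2 * d - 1, by omega⟩
  simp only at h₀ h₁
  omega

lemma interleave_deinterleave (he : StrictMono e) (hlt : ∀ k, e k < n + d) :
    interleave (deinterleave (n := n) e) = e := by
  funext k
  have := le_apply_and_apply_add_le he hlt k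
  obtain ⟨a, rfl | rfl⟩ := exists_eq_twoMul_or_eq_twoMulAddOne k
  · simp only [val_twoMul] at this
    rw [interleave_twoMul, deinterleave, Fin.val_ofNat, Nat.mod_eq_of_lt (by omega)]
    omega
  · simp only [val_twoMulAddOne] at this
    rw [interleave_twoMulAddOne, deinterleave, Fin.val_ofNat, Nat.mod_eq_of_lt (by omega)]
    omega

lemma deinterleave_mem (he : StrictMono e) (hlt : ∀ k, e k < n + d) :
    deinterleave e ∈ interleavingPairs n d := by
  refine mem_interleavingPairs_iff.2 ⟨fun a => ?_, by rwa [interleave_deinterleave he hlt]⟩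
  have := le_apply_and_apply_add_le he hlt (twoMul a)
  simp only [val_twoMul] at this
  rw [deinterleave, Fin.val_ofNat, Nat.mod_eq_of_lt (by omega)]
  omega

end deinterleave

theorem card_interleavingPairs : #(interleavingPairs n d) = (n + d).choose (2 * d) := by
  rw [← card_range (n + d), ← card_powersetCard]
  refine card_bij' (fun p _ => univ.image (interleave p))
    (fun s hs => deinterleave (s.orderEmbOfFin (mem_powersetCard.1 hs).2)) ?_ ?_ ?_ ?_
  · intro p hp
    have hmono := (mem_interleavingPairs_iff.1 hp).2
    rw [mem_powersetCard, card_image_of_injective _ hmono.injective, card_univ, Fintype.card_fin]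
    refine ⟨fun x hx => ?_, rfl⟩
    obtain ⟨k, -, rfl⟩ := mem_image.1 hx
    exact mem_range.2 (interleave_lt p k)
  · intro s hs
    obtain ⟨hsub, hcard⟩ := mem_powersetCard.1 hs
    exact deinterleave_mem (s.orderEmbOfFin hcard).strictMono
      fun k => mem_range.1 (hsub (s.orderEmbOfFin_mem hcard k))
  · intro p hp
    obtain ⟨hI, hmono⟩ := mem_interleavingPairs_iff.1 hp
    have h := orderEmbOfFin_unique (s := univ.image (interleave p))
      (by rw [card_image_of_injective _ hmono.injective, card_univ, Fintype.card_fin])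
      (fun k => mem_image_of_mem _ (mem_univ k)) hmono
    simp only [← h, deinterleave_interleave hI]
  · intro s hs
    obtain ⟨hsub, hcard⟩ := mem_powersetCard.1 hs
    rw [interleave_deinterleave (s.orderEmbOfFin hcard).strictMono
      fun k => mem_range.1 (hsub (s.orderEmbOfFin_mem hcard k)), image_orderEmbOfFin_univ]

end HigherAuslander

theorem finrank_higher_auslander_general (𝕜 : Type*) [Field 𝕜] (n d : ℕ) :
    Module.finrank 𝕜 (RingQuot (auslanderRel 𝕜 n d)) = (interleavingPairs n d).card ∧
    (interleavingPairs n d).card = (n + d).choose (2 * d) :=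
  ⟨HigherAuslander.finrank_ringQuot_auslanderRel 𝕜, HigherAuslander.card_interleavingPairs⟩

/-- The `𝕜`-dimension of the higher Auslander algebra `A_n^{(d)}`, i.e. of the quotient of the
incidence algebra of the poset of `d`-element subsets of `{1,…,n}` by the two-sided ideal
generated by the `f_{JI}` with `j_a ≥ i_{a+1}` for some `a < d`, equals the number of
interleaving pairs `(I, J)`, which in turn equals `(n+d).choose (2d)`. -/
theorem finrank_higher_auslander (𝕜 : Type*) [Field 𝕜] (n d : ℕ) (hd : 1 ≤ d) (hdn : d ≤ n) :
    Module.finrank 𝕜 (RingQuot (auslanderRel 𝕜 n d)) = (interleavingPairs n d).card ∧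
    (interleavingPairs n d).card = (n + d).choose (2 * d) :=
  finrank_higher_auslander_general 𝕜 n d
end

section
/- For all $n \geq d \geq 0$, the number of pairs $(I,J)$ of $d$-element subsets of $\{1,\dots,n\}$ with increasing enumerations satisfying $i_a \leq j_a < i_{a+1}$ for all $1 \leq a < d$ and $i_d \leq j_d \leq n$ equals $\binom{n+d}{2d}$. -/
/-!
In the interleaving chain `1 ≤ i₁ ≤ j₁ < i₂ ≤ j₂ < ⋯ < i_d ≤ j_d ≤ n`, replace `i_a` by
`i_a + a - 2` and `j_a` by `j_a + a - 1`: the weak inequalities become strict, giving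
`i₁ - 1 < j₁ < i₂ < j₂ + 1 < i₃ + 1 < ⋯ < j_d + d - 1`, a strictly increasing sequence of
length `2d` in `{0, …, n + d - 1}`. This is a bijection onto such sequences, i.e. onto the
`2d`-subsets of an `(n + d)`-set.
-/

open Finset

def strictMonoEquivOrderEmbedding (k m : ℕ) :
    {f : Fin k → Fin m // StrictMono f} ≃ (Fin k ↪o Fin m) where
  toFun f := OrderEmbedding.ofStrictMono f.1 f.2
  invFun e := ⟨e, e.strictMono⟩

theorem card_filter_strictMono (k m : ℕ) : #{f : Fin k → Fin m | StrictMono f} = m.choose k := by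
  rw [← Fintype.card_subtype, Fintype.card_congr (strictMonoEquivOrderEmbedding k m),
    ← Nat.card_eq_fintype_card, Nat.card_congr Set.powersetCard.ofFinEmbEquiv,
    Set.powersetCard.card, Nat.card_fin]

namespace Fin

variable {m N : ℕ} {f : Fin m → Fin N}

theorem val_add_sub_le_of_strictMono (hf : StrictMono f) {i j : Fin m} (hij : i ≤ j) :
    (f i : ℕ) + (j - i) ≤ f j := by
  have hsub : (Icc i j).image f ⊆ Icc (f i) (f j) := by
    intro x hx
    obtain ⟨y, hy, rfl⟩ := mem_image.mp hx
    rw [mem_Icc] at hy ⊢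
    exact ⟨hf.monotone hy.1, hf.monotone hy.2⟩
  have hcard := card_le_card hsub
  rw [card_image_of_injective _ hf.injective, card_Icc, card_Icc] at hcard
  have : (i : ℕ) ≤ j := hij
  omega

theorem le_val_of_strictMono (hf : StrictMono f) (i : Fin m) : (i : ℕ) ≤ f i := by
  have := val_add_sub_le_of_strictMono hf (i := ⟨0, i.pos⟩) (j := i) (Nat.zero_le _)
  simp only at this
  omega

theorem val_add_le_of_strictMono (hf : StrictMono f) (i : Fin m) : (f i : ℕ) + m ≤ N + i := by
  have hm := i.isLt
  have hgap := val_add_sub_le_of_strictMono hf (j := ⟨m - 1, by omega⟩)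
    (show (i : ℕ) ≤ m - 1 by omega)
  have hlast := (f ⟨m - 1, by omega⟩).isLt
  simp only at hgap
  omega

end Fin

section Interleaving

variable {n d : ℕ}

def evenIdx (a : Fin d) : Fin (2 * d) := ⟨2 * a, by omega⟩

def oddIdx (a : Fin d) : Fin (2 * d) := ⟨2 * a + 1, by omega⟩

@[simp] theorem val_evenIdx (a : Fin d) : (evenIdx a : ℕ) = 2 * a := rfl

@[simp] theorem val_oddIdx (a : Fin d) : (oddIdx a : ℕ) = 2 * a + 1 := rfl

theorem exists_eq_evenIdx_or_eq_oddIdx (k : Fin (2 * d)) :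
    ∃ a : Fin d, k = evenIdx a ∨ k = oddIdx a :=
  ⟨⟨k / 2, by omega⟩, by simp only [evenIdx, oddIdx, Fin.ext_iff]; omega⟩

def mergeSeq (p : (Fin d → Fin (n + 1)) × (Fin d → Fin (n + 1))) (k : Fin (2 * d)) :
    Fin (n + d) :=
  have hk : (k : ℕ) / 2 < d := by omega
  ⟨if (k : ℕ) % 2 = 0 then p.1 ⟨k / 2, hk⟩ + k / 2 - 1 else p.2 ⟨k / 2, hk⟩ + k / 2, by
    have := (p.1 ⟨k / 2, hk⟩).isLt
    have := (p.2 ⟨k / 2, hk⟩).isLt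
    split_ifs <;> omega⟩

-- `Fin.ofNat` wraps around only when `c` is not strictly monotone.
def splitSeq (c : Fin (2 * d) → Fin (n + d)) : (Fin d → Fin (n + 1)) × (Fin d → Fin (n + 1)) :=
  (fun a => Fin.ofNat (n + 1) (c (evenIdx a) + 1 - a),
    fun a => Fin.ofNat (n + 1) (c (oddIdx a) - a))

variable {p : (Fin d → Fin (n + 1)) × (Fin d → Fin (n + 1))} {c : Fin (2 * d) → Fin (n + d)}

theorem mergeSeq_evenIdx (a : Fin d) :
    (mergeSeq p (evenIdx a) : ℕ) = p.1 a + a - 1 := by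
  simp [mergeSeq, evenIdx]

theorem mergeSeq_oddIdx (a : Fin d) :
    (mergeSeq p (oddIdx a) : ℕ) = p.2 a + a := by
  have h : (2 * (a : ℕ) + 1) / 2 = a := by omega
  simp [mergeSeq, oddIdx, h]

theorem strictMono_mergeSeq (hp : p ∈ interleavingPairs n d) : StrictMono (mergeSeq p) := by
  simp only [interleavingPairs, mem_filter, mem_univ, true_and] at hp
  obtain ⟨hi, hj, hi_pos, -, hij, hji⟩ := hp
  have hi_mono : StrictMono p.1 := fun a b => hi a b
  have hj_mono : StrictMono p.2 := fun a b => hj a b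
  have hj_lt_i (a b : Fin d) (hab : a < b) : (p.2 a : ℕ) < p.1 b := by
    have hab' : (a : ℕ) + 1 < d := by omega
    exact (hji a ⟨a + 1, hab'⟩ rfl).trans_le (hi_mono.monotone (Fin.mk_le_of_le_val hab))
  intro k l hkl
  obtain ⟨a, rfl | rfl⟩ := exists_eq_evenIdx_or_eq_oddIdx k <;>
  obtain ⟨b, rfl | rfl⟩ := exists_eq_evenIdx_or_eq_oddIdx l <;>
  simp only [Fin.lt_def, mergeSeq_evenIdx, mergeSeq_oddIdx, val_evenIdx, val_oddIdx] at hkl ⊢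
  · have := hi_mono (Fin.lt_def.mpr (by omega : (a : ℕ) < b))
    have := hi_pos a
    omega
  · have := hij a
    have := hj_mono.monotone (Fin.le_def.mpr (by omega : (a : ℕ) ≤ b))
    have := hi_pos a
    omega
  · have := hj_lt_i a b (Fin.lt_def.mpr (by omega))
    omega
  · have := hj_mono (Fin.lt_def.mpr (by omega : (a : ℕ) < b))
    omega

theorem splitSeq_fst_val (hc : StrictMono c) (a : Fin d) :
    ((splitSeq c).1 a : ℕ) = c (evenIdx a) + 1 - a := by
  have := Fin.val_add_le_of_strictMono hc (evenIdx a)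
  rw [val_evenIdx] at this
  exact Nat.mod_eq_of_lt (by omega)

theorem splitSeq_snd_val (hc : StrictMono c) (a : Fin d) :
    ((splitSeq c).2 a : ℕ) = c (oddIdx a) - a := by
  have := Fin.val_add_le_of_strictMono hc (oddIdx a)
  rw [val_oddIdx] at this
  exact Nat.mod_eq_of_lt (by omega)

theorem splitSeq_mem (hc : StrictMono c) : splitSeq c ∈ interleavingPairs n d := by
  have low_even (a : Fin d) : 2 * (a : ℕ) ≤ c (evenIdx a) :=
    Fin.le_val_of_strictMono hc (evenIdx a)
  have low_odd (a : Fin d) : 2 * (a : ℕ) + 1 ≤ c (oddIdx a) :=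
    Fin.le_val_of_strictMono hc (oddIdx a)
  have gap_even (a b : Fin d) (h : (a : ℕ) ≤ b) :
      (c (evenIdx a) : ℕ) + (2 * (b : ℕ) - 2 * a) ≤ c (evenIdx b) := by
    have := Fin.val_add_sub_le_of_strictMono hc (i := evenIdx a) (j := evenIdx b)
      (by rw [Fin.le_def, val_evenIdx, val_evenIdx]; omega)
    rw [val_evenIdx, val_evenIdx] at this
    omega
  have gap_odd (a b : Fin d) (h : (a : ℕ) ≤ b) :
      (c (oddIdx a) : ℕ) + (2 * (b : ℕ) - 2 * a) ≤ c (oddIdx b) := by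
    have := Fin.val_add_sub_le_of_strictMono hc (i := oddIdx a) (j := oddIdx b)
      (by rw [Fin.le_def, val_oddIdx, val_oddIdx]; omega)
    rw [val_oddIdx, val_oddIdx] at this
    omega
  simp only [interleavingPairs, mem_filter, mem_univ, true_and, Fin.lt_def,
    splitSeq_fst_val hc, splitSeq_snd_val hc]
  refine ⟨fun a b hab => ?_, fun a b hab => ?_, fun a => ?_, fun a => ?_, fun a => ?_,
    fun a b hab => ?_⟩
  · have := gap_even a b hab.le
    have := low_even a
    omega
  · have := gap_odd a b hab.le
    have := low_odd a
    omega
  · have := low_even a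
    omega
  · have := low_odd a
    omega
  · have : (c (evenIdx a) : ℕ) < c (oddIdx a) := hc (by simp [Fin.lt_def])
    have := low_even a
    omega
  · have : (c (oddIdx a) : ℕ) < c (evenIdx b) := hc (by simp [Fin.lt_def]; omega)
    have := low_odd a
    omega

theorem splitSeq_mergeSeq (hp : p ∈ interleavingPairs n d) : splitSeq (mergeSeq p) = p := by
  have hc := strictMono_mergeSeq hp
  have hi_pos : ∀ a, 1 ≤ (p.1 a : ℕ) := (mem_filter.mp hp).2.2.2.1
  refine Prod.ext (funext fun a => Fin.ext ?_) (funext fun a => Fin.ext ?_)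
  · rw [splitSeq_fst_val hc, mergeSeq_evenIdx]
    have := hi_pos a
    omega
  · rw [splitSeq_snd_val hc, mergeSeq_oddIdx]
    omega

theorem mergeSeq_splitSeq (hc : StrictMono c) : mergeSeq (splitSeq c) = c := by
  funext k
  apply Fin.ext
  have := Fin.le_val_of_strictMono hc k
  obtain ⟨a, rfl | rfl⟩ := exists_eq_evenIdx_or_eq_oddIdx k
  · rw [mergeSeq_evenIdx, splitSeq_fst_val hc, val_evenIdx] at *
    omega
  · rw [mergeSeq_oddIdx, splitSeq_snd_val hc, val_oddIdx] at *
    omega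

end Interleaving

theorem card_interleavingPairs_general (n d : ℕ) :
    (interleavingPairs n d).card = (n + d).choose (2 * d) := by
  rw [← card_filter_strictMono]
  refine card_nbij' mergeSeq splitSeq (fun p hp => ?_) (fun c hc => ?_)
    (fun p hp => splitSeq_mergeSeq hp) (fun c hc => mergeSeq_splitSeq ?_)
  · simpa using strictMono_mergeSeq hp
  · exact splitSeq_mem (by simpa using hc)
  · simpa using hc

/-- For `n ≥ d ≥ 0`, the number of interleaving pairs of `d`-element subsets of `{1,…,n}`
equals `(n+d).choose (2d)`. -/
theorem card_interleavingPairs (n d : ℕ) (hdn : d ≤ n) :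
    (interleavingPairs n d).card = (n + d).choose (2 * d) :=
  card_interleavingPairs_general n d
end

section
/- Let $I, J$ be $d$-element subsets of $\{1,\dots,n\}$ with increasing enumerations satisfying $i_a \leq j_a$ for all $a$. The maximum element $\pi_0^{JI}$ of the set $X_{JI} = \{\pi \in S_d : \forall a,\ i_a \leq j_{\pi(a)}\}$ in the Bruhat order is the identity permutation if and only if $j_a < i_{a+1}$ for all $1 \leq a < d$. -/
open Equiv

theorem inversions_one {d : ℕ} : inversions (1 : Perm (Fin d)) = 0 := by
  rw [inversions, Finset.card_eq_zero, Finset.filter_eq_empty_iff]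
  exact fun p _ h => lt_asymm h.1 h.2

theorem eq_one_of_inversions_eq_zero {d : ℕ} {π : Perm (Fin d)} (h : inversions π = 0) :
    π = 1 := by
  have hmono : StrictMono π := fun a b hab => by
    by_contra! hba
    have hinv : (a, b) ∈ Finset.univ.filter
        fun p : Fin d × Fin d => p.1 < p.2 ∧ π p.2 < π p.1 :=
      Finset.mem_filter.2 ⟨Finset.mem_univ _, hab, hba.lt_of_ne (π.injective.ne hab.ne')⟩
    exact Finset.notMem_empty _ (Finset.card_eq_zero.1 h ▸ hinv)
  exact Equiv.ext fun _ => hmono.apply_eq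

theorem BruhatLE.inversions_le {d : ℕ} {π' π : Perm (Fin d)} (h : BruhatLE π' π) :
    inversions π' ≤ inversions π := by
  induction h with
  | refl => exact le_rfl
  | tail _ hcov ih => exact ih.trans (hcov.2 ▸ Nat.le_succ _)

theorem bruhatLE_one_iff {d : ℕ} {π : Perm (Fin d)} : BruhatLE π 1 ↔ π = 1 := by
  refine ⟨fun h => eq_one_of_inversions_eq_zero ?_, fun h => h ▸ .refl⟩
  simpa [inversions_one] using h.inversions_le

theorem Fin.perm_eq_one_of_forall_le_apply {d : ℕ} {π : Perm (Fin d)}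
    (h : ∀ a, a ≤ π a) : π = 1 := by
  have hsum : ∑ a : Fin d, (a : ℕ) = ∑ a, (π a : ℕ) := (Equiv.sum_comp π _).symm
  have hfix := (Finset.sum_eq_sum_iff_of_le fun a _ => Fin.le_iff_val_le_val.1 (h a)).1 hsum
  exact Equiv.ext fun a => Fin.ext (hfix a (Finset.mem_univ a)).symm

section

variable {d : ℕ} {i j : Fin d → ℕ}

theorem le_comp_swap (hj : Monotone j) (hIJ : ∀ a, i a ≤ j a) {x y : Fin d} (hxy : x ≤ y)
    (hyx : i y ≤ j x) (b : Fin d) : i b ≤ j (swap x y b) := by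
  rcases eq_or_ne b x with rfl | hbx
  · simpa using (hIJ b).trans (hj hxy)
  rcases eq_or_ne b y with rfl | hby
  · simpa using hyx
  · simpa [swap_apply_of_ne_of_ne hbx hby] using hIJ b

theorem lt_of_forall_lt_succ (hj : Monotone j)
    (hgap : ∀ (a : ℕ) (h : a + 1 < d), j ⟨a, Nat.lt_of_succ_lt h⟩ < i ⟨a + 1, h⟩)
    {a b : Fin d} (hba : b < a) : j b < i a := by
  have hlt : (a : ℕ) - 1 + 1 < d := by omega
  calc j b ≤ j ⟨a - 1, Nat.lt_of_succ_lt hlt⟩ := hj (Fin.le_iff_val_le_val.2 (by simp; omega))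
    _ < i ⟨a - 1 + 1, hlt⟩ := hgap _ hlt
    _ = i a := congrArg i (Fin.ext (by simp; omega))

theorem le_apply_of_forall_lt (hsep : ∀ {a b : Fin d}, b < a → j b < i a)
    {π : Perm (Fin d)} (hπ : ∀ a, i a ≤ j (π a)) (a : Fin d) : a ≤ π a :=
  not_lt.1 fun h => (hπ a).not_gt (hsep h)

end

theorem bruhat_max_eq_one_iff_general (d : ℕ) (i j : Fin d → ℕ)
    (hj : StrictMono j)
    (hIJ : ∀ a, i a ≤ j a)
    (π₀ : Equiv.Perm (Fin d)) (hmem : ∀ a, i a ≤ j (π₀ a))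
    (hmax : ∀ π : Equiv.Perm (Fin d), (∀ a, i a ≤ j (π a)) → BruhatLE π π₀) :
    π₀ = 1 ↔ ∀ (a : ℕ) (h : a + 1 < d), j ⟨a, Nat.lt_of_succ_lt h⟩ < i ⟨a + 1, h⟩ := by
  constructor
  · rintro rfl a ha
    by_contra! hle
    set x : Fin d := ⟨a, Nat.lt_of_succ_lt ha⟩
    set y : Fin d := ⟨a + 1, ha⟩
    have hxy : x < y := Fin.lt_def.2 (Nat.lt_succ_self a)
    have hswap := bruhatLE_one_iff.1 (hmax _ (le_comp_swap hj.monotone hIJ hxy.le hle))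
    simpa [hxy.ne'] using congrArg (· x) hswap
  · intro hgap
    exact Fin.perm_eq_one_of_forall_le_apply
      (le_apply_of_forall_lt (lt_of_forall_lt_succ hj.monotone hgap) hmem)

/-- For `I ≤ J` componentwise, the Bruhat-maximum `π₀` of
`X_{JI} = {π : ∀ a, i_a ≤ j_{π(a)}}` is the identity permutation if and only if
`j_a < i_{a+1}` for all `1 ≤ a < d`. -/
theorem bruhat_max_eq_one_iff (d n : ℕ) (i j : Fin d → ℕ)
    (hi : StrictMono i) (hj : StrictMono j)
    (hi' : ∀ a, i a ∈ Finset.Icc 1 n) (hj' : ∀ a, j a ∈ Finset.Icc 1 n)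
    (hIJ : ∀ a, i a ≤ j a)
    (π₀ : Equiv.Perm (Fin d)) (hmem : ∀ a, i a ≤ j (π₀ a))
    (hmax : ∀ π : Equiv.Perm (Fin d), (∀ a, i a ≤ j (π a)) → BruhatLE π π₀) :
    π₀ = 1 ↔ ∀ (a : ℕ) (h : a + 1 < d), j ⟨a, Nat.lt_of_succ_lt h⟩ < i ⟨a + 1, h⟩ :=
  bruhat_max_eq_one_iff_general d i j hj hIJ π₀ hmem hmax
end
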